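/- arXiv:1210.0340 — 3 statements merged into one kernel-verified Lean document; each statement's English description precedes it below -/
import Mathlib

section
/- Let F be a finite family of subsets of a finite set U with q elements, and let r be a positive integer. If each element s of U is independently assigned a weight w(s) chosen uniformly at random from {1,...,r}, and the weight of a subset S is defined as the sum of weights of its elements, then the probability that there is a unique subset in F of minimum weight is at least 1 - q/r. -/
/-!
Call `x ∈ U` singular for a weighting `w` if some minimum-weight member of `F` contains `x` and
another one does not. If the minimum is not unique, two distinct minimizers differ in some element,
which is then singular. Changing only the weight of `x` shifts the weight of the members containing
`x` and fixes the others, so at most one value of `w x` makes `x` singular once the other weights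
are fixed. Hence each `x` is singular for at most `r ^ q / r` weightings, and a union bound over
the `q` elements gives the claim.
-/

open Finset

section Weights

variable {U α : Type*} [AddCommMonoid α] [LinearOrder α]

def IsMinWeight (F : Finset (Finset U)) (w : U → α) (S : Finset U) : Prop :=
  S ∈ F ∧ ∀ T ∈ F, ∑ x ∈ S, w x ≤ ∑ x ∈ T, w x

def HasUniqueMinWeight (F : Finset (Finset U)) (w : U → α) : Prop :=
  ∃ S ∈ F, ∀ T ∈ F, T ≠ S → ∑ x ∈ S, w x < ∑ x ∈ T, w x

def IsSingular (F : Finset (Finset U)) (w : U → α) (x : U) : Prop :=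
  ∃ S T, IsMinWeight F w S ∧ IsMinWeight F w T ∧ x ∉ S ∧ x ∈ T

theorem exists_isSingular_of_not_hasUniqueMinWeight {F : Finset (Finset U)} (hF : F.Nonempty)
    {w : U → α} (h : ¬ HasUniqueMinWeight F w) : ∃ x, IsSingular F w x := by
  obtain ⟨S, hS, hSmin⟩ := exists_min_image F (fun S => ∑ x ∈ S, w x) hF
  obtain ⟨T, hT, hTS, hTle⟩ : ∃ T ∈ F, T ≠ S ∧ ∑ x ∈ T, w x ≤ ∑ x ∈ S, w x := by
    unfold HasUniqueMinWeight at h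
    push Not at h
    exact h S hS
  have hSw : IsMinWeight F w S := ⟨hS, hSmin⟩
  have hTw : IsMinWeight F w T := ⟨hT, fun A hA => hTle.trans (hSmin A hA)⟩
  by_cases hTsub : T ⊆ S
  · obtain ⟨x, hxS, hxT⟩ := not_subset.1 fun hST => hTS (hTsub.antisymm hST)
    exact ⟨x, T, S, hTw, hSw, hxT, hxS⟩
  · obtain ⟨x, hxT, hxS⟩ := not_subset.1 hTsub
    exact ⟨x, S, T, hSw, hTw, hxS, hxT⟩

variable [IsOrderedCancelAddMonoid α] [DecidableEq U]

theorem apply_le_of_isMinWeight {F : Finset (Finset U)} {w w' : U → α} {x : U}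
    (hww' : ∀ y ≠ x, w y = w' y) {S T : Finset U} (hS : IsMinWeight F w S) (hxS : x ∉ S)
    (hT : IsMinWeight F w' T) (hxT : x ∈ T) : w' x ≤ w x := by
  have hsumS : ∑ y ∈ S, w' y = ∑ y ∈ S, w y :=
    sum_congr rfl fun y hy => (hww' y (ne_of_mem_of_not_mem hy hxS)).symm
  have hsumT : ∑ y ∈ T, w y + w' x = ∑ y ∈ T, w' y + w x := by
    rw [← sum_erase_add _ _ hxT, ← sum_erase_add _ _ hxT, add_right_comm,
      sum_congr rfl fun y hy => hww' y (ne_of_mem_erase hy)]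
  refine le_of_add_le_add_left (a := ∑ y ∈ T, w y) ?_
  calc ∑ y ∈ T, w y + w' x = ∑ y ∈ T, w' y + w x := hsumT
    _ ≤ ∑ y ∈ S, w' y + w x := add_le_add_left (hT.2 S hS.1) _
    _ = ∑ y ∈ S, w y + w x := by rw [hsumS]
    _ ≤ ∑ y ∈ T, w y + w x := add_le_add_left (hS.2 T hT.1) _

theorem IsSingular.apply_eq {F : Finset (Finset U)} {w w' : U → α} {x : U}
    (hww' : ∀ y ≠ x, w y = w' y) (hw : IsSingular F w x) (hw' : IsSingular F w' x) :
    w x = w' x := by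
  obtain ⟨S, T, hS, hT, hxS, hxT⟩ := hw
  obtain ⟨S', T', hS', hT', hxS', hxT'⟩ := hw'
  exact le_antisymm (apply_le_of_isMinWeight (fun y hy => (hww' y hy).symm) hS' hxS' hT hxT)
    (apply_le_of_isMinWeight hww' hS hxS hT' hxT')

end Weights

theorem card_mul_le_of_eq_of_forall_ne_eq {U β : Type*} [Fintype U] [DecidableEq U] [Fintype β]
    (s : Finset (U → β)) (x : U) (hs : ∀ f ∈ s, ∀ g ∈ s, (∀ y ≠ x, f y = g y) → f = g) :
    #s * Fintype.card β ≤ Fintype.card β ^ Fintype.card U := by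
  have hinj : Set.InjOn (fun f : U → β => fun y : {y // y ≠ x} => f y) s :=
    fun f hf g hg hfg => hs f hf g hg fun y hy => congrFun hfg ⟨y, hy⟩
  have hcard :
      Fintype.card β * Fintype.card ({y // y ≠ x} → β) = Fintype.card β ^ Fintype.card U := by
    rw [← Fintype.card_prod, ← Fintype.card_congr (Equiv.piSplitAt x fun _ => β),
      Fintype.card_fun]
  calc #s * Fintype.card β ≤ Fintype.card ({y // y ≠ x} → β) * Fintype.card β :=
        Nat.mul_le_mul_right _ (card_le_card_of_injOn _ (fun _ _ => mem_coe.2 (mem_univ _)) hinj)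
    _ = Fintype.card β ^ Fintype.card U := by rw [mul_comm, hcard]

section Counting

open scoped Classical

variable {U β α : Type*} [Fintype U] [DecidableEq U] [Fintype β]
  [AddCommMonoid α] [LinearOrder α] [IsOrderedCancelAddMonoid α] {ν : β → α}

theorem card_isSingular_mul_le (hν : ν.Injective) (F : Finset (Finset U)) (x : U) :
    #{g : U → β | IsSingular F (ν ∘ g) x} * Fintype.card β ≤ Fintype.card β ^ Fintype.card U := by
  refine card_mul_le_of_eq_of_forall_ne_eq _ x fun f hf g hg hfg => funext fun y => ?_
  by_cases hy : y = x
  · subst hy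
    exact hν ((mem_filter.1 hf).2.apply_eq (fun z hz => congrArg ν (hfg z hz)) (mem_filter.1 hg).2)
  · exact hfg y hy

theorem card_not_hasUniqueMinWeight_mul_le (hν : ν.Injective) {F : Finset (Finset U)}
    (hF : F.Nonempty) :
    #{g : U → β | ¬ HasUniqueMinWeight F (ν ∘ g)} * Fintype.card β ≤
      Fintype.card U * Fintype.card β ^ Fintype.card U := by
  have hsub : univ.filter (fun g : U → β => ¬ HasUniqueMinWeight F (ν ∘ g)) ⊆
      univ.biUnion fun x => {g : U → β | IsSingular F (ν ∘ g) x} := by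
    intro g hg
    obtain ⟨x, hx⟩ := exists_isSingular_of_not_hasUniqueMinWeight hF (mem_filter.1 hg).2
    exact mem_biUnion.2 ⟨x, mem_univ _, mem_filter.2 ⟨mem_univ _, hx⟩⟩
  calc _ ≤ #(univ.biUnion fun x => {g : U → β | IsSingular F (ν ∘ g) x}) * Fintype.card β :=
        Nat.mul_le_mul_right _ (card_le_card hsub)
    _ ≤ (∑ x, #{g : U → β | IsSingular F (ν ∘ g) x}) * Fintype.card β :=
        Nat.mul_le_mul_right _ card_biUnion_le
    _ ≤ ∑ _x : U, Fintype.card β ^ Fintype.card U := by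
        rw [sum_mul]; exact sum_le_sum fun x _ => card_isSingular_mul_le hν F x
    _ = Fintype.card U * Fintype.card β ^ Fintype.card U := by simp

end Counting

/-- **Isolation lemma** (Mulmuley–Vazirani–Vazirani).
If each element of a `q`-element set `U` is independently assigned a weight
uniformly at random from `{1,...,r}` (encoded as `w x + 1` for `w : U → Fin r`),
and the weight of a subset is the sum of the weights of its elements, then the
probability that a nonempty family `F` of subsets of `U` contains a unique
subset of minimum weight is at least `1 - q/r`. -/
theorem isolation_lemma (U : Type*) [Fintype U] [DecidableEq U] (q : ℕ)
    (hq : Fintype.card U = q) (F : Finset (Finset U)) (hF : F.Nonempty)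
    (r : ℕ) (hr : 0 < r) :
    (1 : ℚ) - (q : ℚ) / (r : ℚ) ≤
      ((Finset.univ.filter (fun w : U → Fin r =>
          ∃ S ∈ F, ∀ T ∈ F, T ≠ S →
            (∑ x ∈ S, ((w x : ℕ) + 1)) < ∑ x ∈ T, ((w x : ℕ) + 1))).card : ℚ)
        / (Fintype.card (U → Fin r) : ℚ) := by
  classical
  set G := Finset.univ.filter (fun w : U → Fin r =>
    ∃ S ∈ F, ∀ T ∈ F, T ≠ S → (∑ x ∈ S, ((w x : ℕ) + 1)) < ∑ x ∈ T, ((w x : ℕ) + 1))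
  have hν : (fun i : Fin r => (i : ℕ) + 1).Injective := fun i j h => Fin.ext (by simpa using h)
  have hbad : #Gᶜ * r ≤ q * r ^ q := by
    have := card_not_hasUniqueMinWeight_mul_le hν hF
    rw [Fintype.card_fin, hq, ← compl_filter] at this
    -- the two filters differ only in their decidability instances
    convert this
    exact Iff.rfl
  have hN : (Fintype.card (U → Fin r) : ℚ) = (r : ℚ) ^ q := by simp [hq]
  have htotal : ((#Gᶜ : ℕ) : ℚ) + #G = (r : ℚ) ^ q := by
    rw [← hN]; exact_mod_cast card_compl_add_card G
  have hrQ : (0 : ℚ) < r := by exact_mod_cast hr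
  have hpow : (0 : ℚ) < (r : ℚ) ^ q := pow_pos hrQ q
  rw [hN]
  calc 1 - (q : ℚ) / r ≤ 1 - (#Gᶜ : ℚ) / (r : ℚ) ^ q :=
        sub_le_sub_left ((div_le_div_iff₀ hpow hrQ).2 (by exact_mod_cast hbad)) 1
    _ = #G / (r : ℚ) ^ q := by
        rw [eq_div_iff hpow.ne', sub_mul, one_mul, div_mul_cancel₀ _ hpow.ne', ← htotal]; ring
end

section
/- With the setup of the suffix-swap involution φ on proper sets of walks: if the signature of a proper set S of walks is defined (i.e., two walks in S intersect), then φ(S) ≠ S, the walks of φ(S) have the same total length as those of S, and the multiset of edge occurrences over all walks of φ(S) equals that of S. -/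
set_option autoImplicit false

open scoped Classical

noncomputable section

variable {V : Type*}

/-- The list of edge occurrences of a walk given by its list of vertices. -/
def edgesOf (w : List V) : List (V × V) := w.zip w.tail

/-- `w` is a walk in the directed graph `E` from the source set `X` to the sink
set `Y`: it has at least two vertices, consecutive vertices are joined by edges,
its first vertex is in `X`, its last vertex is in `Y`, and all intermediate
vertices lie outside `X ∪ Y`. -/
def IsWalk (E : V → V → Prop) (X Y : Set V) (w : List V) : Prop :=
  2 ≤ w.length ∧ w.Chain' E ∧
    (∀ a, w.head? = some a → a ∈ X) ∧
    (∀ b, w.getLast? = some b → b ∈ Y) ∧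
    ∀ v ∈ w.tail.dropLast, v ∉ X ∧ v ∉ Y

/-- A proper (indexed) set of `k` walks: each member is a walk from `X` to `Y`,
and the walks have pairwise distinct start vertices and pairwise distinct end
vertices. -/
def Proper (E : V → V → Prop) (X Y : Set V) {k : ℕ} (S : Fin k → List V) : Prop :=
  (∀ i, IsWalk E X Y (S i)) ∧
    Function.Injective (fun i => (S i).head?) ∧
    Function.Injective (fun i => (S i).getLast?)

/-- The walks `S i` are pairwise vertex-disjoint. -/
def Disjointly {k : ℕ} (S : Fin k → List V) : Prop :=
  ∀ i j, i ≠ j → ∀ v, v ∈ S i → v ∉ S j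

/-- The total length of an indexed set of walks (each walk on `m` vertices has
length `m - 1`). -/
def totalLen {k : ℕ} (S : Fin k → List V) : ℕ := ∑ i, ((S i).length - 1)


/-- The pair `p = (i, j)` is a candidate signature of `S`: `i ≠ j`, the walks
`S i` and `S j` intersect, and the first vertex of `S i` lying on some other
walk of `S` is exactly the first vertex of `S i` lying on `S j`. -/
def SigProp {k : ℕ} (S : Fin k → List V) (p : Fin k × Fin k) : Prop :=
  p.1 ≠ p.2 ∧ (∃ v, v ∈ S p.1 ∧ v ∈ S p.2) ∧
    (S p.1).find? (fun v => decide (∃ j, j ≠ p.1 ∧ v ∈ S j))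
      = (S p.1).find? (fun v => decide (v ∈ S p.2))

/-- The signature of `S`: the lexicographically smallest pair `(i, j)`
satisfying `SigProp`, if one exists. -/
def signature {k : ℕ} (S : Fin k → List V) : Option (Fin k × Fin k) :=
  let s := (Finset.univ.filter (fun p : Fin k × Fin k => SigProp S p)).image toLex
  if h : s.Nonempty then some (ofLex (s.min' h)) else none

/-- Swap the suffixes of the two walks `w₁`, `w₂` at the vertex `v` (at the
first occurrence of `v` on each of them). -/
def swapAt (v : V) (w₁ w₂ : List V) : List V × List V :=
  (w₁.takeWhile (fun u => decide (u ≠ v)) ++ w₂.dropWhile (fun u => decide (u ≠ v)),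
   w₂.takeWhile (fun u => decide (u ≠ v)) ++ w₁.dropWhile (fun u => decide (u ≠ v)))

/-- The suffix-swap map `φ`: if `S` has a signature `(i, j)`, swap the suffixes
of `S i` and `S j` at the first vertex of `S i` lying on `S j`; otherwise `φ`
is the identity. -/
def phi {k : ℕ} (S : Fin k → List V) : Fin k → List V :=
  match signature S with
  | none => S
  | some (i, j) =>
    match (S i).find? (fun v => decide (v ∈ S j)) with
    | none => S
    | some v =>
        Function.update (Function.update S i (swapAt v (S i) (S j)).1) j
          (swapAt v (S i) (S j)).2

/-! `φ` cuts `S i` and `S j` at a common vertex `v`, taken at its first occurrence on both, and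
exchanges the tails: `a₁ ++ v :: r₁, a₂ ++ v :: r₂ ↦ a₁ ++ v :: r₂, a₂ ++ v :: r₁`. Cutting a walk at
a vertex splits its edge list into the edges before and after that vertex, so the two new walks
use exactly the old edge occurrences between them; total length follows, since a walk's length
is its number of edge occurrences. The new `i`-th walk ends where `S j` does, and the end vertices
of a proper set are distinct, so `φ S ≠ S`. -/

theorem List.find?_eq_some_of_imp {α : Type*} {p q : α → Bool} {l : List α} {v : α}
    (h : l.find? p = some v) (hqv : q v = true) (hqp : ∀ x, q x = true → p x = true) :
    l.find? q = some v := by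
  obtain ⟨-, as, bs, rfl, has⟩ := List.find?_eq_some_iff_append.mp h
  refine List.find?_eq_some_iff_append.mpr ⟨hqv, as, bs, rfl, fun a ha => ?_⟩
  simpa using mt (hqp a) (by simpa using has a ha)

theorem Finset.sum_apply_update_update {ι α M : Type*} [Fintype ι] [DecidableEq ι]
    [AddCommMonoid M] (F : α → M) (f : ι → α) {i j : ι} (hij : i ≠ j) {a b : α}
    (h : F a + F b = F (f i) + F (f j)) :
    ∑ t, F (Function.update (Function.update f i a) j b t) = ∑ t, F (f t) := by
  have hj : j ∈ (univ : Finset ι).erase i := mem_erase.mpr ⟨hij.symm, mem_univ j⟩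
  rw [← add_sum_erase _ _ (mem_univ i), ← add_sum_erase _ _ hj,
    ← add_sum_erase _ _ (mem_univ i), ← add_sum_erase _ _ hj, ← add_assoc, ← add_assoc]
  simp only [Function.update_self, Function.update_of_ne hij]
  rw [h]
  congr 1
  refine sum_congr rfl fun t ht => ?_
  obtain ⟨htj, hti⟩ : t ≠ j ∧ t ≠ i := by simpa using ht
  simp only [Function.update_of_ne htj, Function.update_of_ne hti]

theorem length_edgesOf (w : List V) : (edgesOf w).length = w.length - 1 := by
  simp [edgesOf]

theorem totalLen_eq_card_sum_edgesOf {k : ℕ} (S : Fin k → List V) :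
    totalLen S = Multiset.card (∑ i, (edgesOf (S i) : Multiset (V × V))) := by
  simp [totalLen, Multiset.card_sum, length_edgesOf]

theorem edgesOf_append_cons (a r : List V) (v : V) :
    edgesOf (a ++ v :: r) = edgesOf (a ++ [v]) ++ edgesOf (v :: r) := by
  induction a with
  | nil => rfl
  | cons x a ih =>
    cases a with
    | nil => rfl
    | cons y a =>
      simp only [List.cons_append] at ih ⊢
      exact congrArg ((x, y) :: ·) ih

theorem swapAt_append_cons {v : V} {a₁ r₁ a₂ r₂ : List V} (h₁ : v ∉ a₁) (h₂ : v ∉ a₂) :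
    swapAt v (a₁ ++ v :: r₁) (a₂ ++ v :: r₂) = (a₁ ++ v :: r₂, a₂ ++ v :: r₁) := by
  have hne : ∀ {a : List V}, v ∉ a → ∀ u ∈ a, decide (u ≠ v) = true := fun h u hu =>
    decide_eq_true (ne_of_mem_of_not_mem hu h)
  simp only [swapAt, List.takeWhile_append_of_pos (hne h₁), List.takeWhile_append_of_pos (hne h₂),
    List.dropWhile_append_of_pos (hne h₁), List.dropWhile_append_of_pos (hne h₂),
    List.takeWhile_cons_of_neg (p := fun u => decide (u ≠ v)) (a := v) (by simp),
    List.dropWhile_cons_of_neg (p := fun u => decide (u ≠ v)) (a := v) (by simp), List.append_nil]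

theorem getLast?_swapAt_fst {v : V} {w₁ w₂ : List V} (h₁ : v ∈ w₁) (h₂ : v ∈ w₂) :
    (swapAt v w₁ w₂).1.getLast? = w₂.getLast? := by
  obtain ⟨a₁, r₁, rfl, ha₁⟩ := List.eq_append_cons_of_mem h₁
  obtain ⟨a₂, r₂, rfl, ha₂⟩ := List.eq_append_cons_of_mem h₂
  rw [swapAt_append_cons ha₁ ha₂, List.getLast?_append_of_ne_nil _ (List.cons_ne_nil v r₂),
    List.getLast?_append_of_ne_nil _ (List.cons_ne_nil v r₂)]

theorem edgesOf_swapAt {v : V} {w₁ w₂ : List V} (h₁ : v ∈ w₁) (h₂ : v ∈ w₂) :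
    (edgesOf (swapAt v w₁ w₂).1 : Multiset (V × V)) + edgesOf (swapAt v w₁ w₂).2
      = edgesOf w₁ + edgesOf w₂ := by
  obtain ⟨a₁, r₁, rfl, ha₁⟩ := List.eq_append_cons_of_mem h₁
  obtain ⟨a₂, r₂, rfl, ha₂⟩ := List.eq_append_cons_of_mem h₂
  rw [swapAt_append_cons ha₁ ha₂, edgesOf_append_cons a₁ r₁, edgesOf_append_cons a₁ r₂,
    edgesOf_append_cons a₂ r₁, edgesOf_append_cons a₂ r₂]
  simp only [← Multiset.coe_add]
  abel

theorem exists_sigProp {k : ℕ} {S : Fin k → List V}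
    (hint : ∃ i j, i ≠ j ∧ ∃ v, v ∈ S i ∧ v ∈ S j) : ∃ p, SigProp S p := by
  obtain ⟨i, j₀, hij₀, v₀, hv₀i, hv₀j⟩ := hint
  obtain ⟨v, hv⟩ : ∃ v, (S i).find? (fun u => decide (∃ j, j ≠ i ∧ u ∈ S j)) = some v :=
    Option.isSome_iff_exists.mp
      (List.find?_isSome.mpr ⟨v₀, hv₀i, by simpa using ⟨j₀, hij₀.symm, hv₀j⟩⟩)
  obtain ⟨j, hji, hvj⟩ : ∃ j, j ≠ i ∧ v ∈ S j := by simpa using List.find?_some hv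
  refine ⟨(i, j), hji.symm, ⟨v, List.mem_of_find?_eq_some hv, hvj⟩, ?_⟩
  rw [hv, List.find?_eq_some_of_imp hv (by simpa using hvj)
    (fun x hx => by simpa using ⟨j, hji, by simpa using hx⟩)]

theorem exists_signature_eq_some {k : ℕ} {S : Fin k → List V} (h : ∃ p, SigProp S p) :
    ∃ p, signature S = some p ∧ SigProp S p := by
  obtain ⟨p, hp⟩ := h
  set s := (Finset.univ.filter (fun p : Fin k × Fin k => SigProp S p)).image toLex
  have hne : s.Nonempty := ⟨toLex p, Finset.mem_image_of_mem _ (by simpa using hp)⟩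
  obtain ⟨q, hq, hqmin⟩ := Finset.mem_image.mp (s.min'_mem hne)
  refine ⟨q, ?_, (Finset.mem_filter.mp hq).2⟩
  rw [signature, dif_pos hne, ← hqmin]
  rfl

theorem phi_eq_update_swapAt {k : ℕ} {S : Fin k → List V} {i j : Fin k} {v : V}
    (hsig : signature S = some (i, j)) (hv : (S i).find? (fun u => decide (u ∈ S j)) = some v) :
    phi S = Function.update (Function.update S i (swapAt v (S i) (S j)).1) j
      (swapAt v (S i) (S j)).2 := by
  simp only [phi, hsig, hv]

theorem exists_phi_eq_update_swapAt {k : ℕ} {S : Fin k → List V}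
    (hint : ∃ i j, i ≠ j ∧ ∃ v, v ∈ S i ∧ v ∈ S j) :
    ∃ i j v, i ≠ j ∧ v ∈ S i ∧ v ∈ S j ∧
      phi S = Function.update (Function.update S i (swapAt v (S i) (S j)).1) j
        (swapAt v (S i) (S j)).2 := by
  obtain ⟨⟨i, j⟩, hsig, hij, ⟨v₀, hv₀i, hv₀j⟩, -⟩ := exists_signature_eq_some (exists_sigProp hint)
  obtain ⟨v, hv⟩ : ∃ v, (S i).find? (fun u => decide (u ∈ S j)) = some v :=
    Option.isSome_iff_exists.mp (List.find?_isSome.mpr ⟨v₀, hv₀i, by simpa using hv₀j⟩)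
  exact ⟨i, j, v, hij, List.mem_of_find?_eq_some hv, by simpa using List.find?_some hv,
    phi_eq_update_swapAt hsig hv⟩

theorem phi_of_intersecting_general (E : V → V → Prop) (X Y : Set V)
    {k : ℕ} (S : Fin k → List V) (hS : Proper E X Y S)
    (hint : ∃ i j, i ≠ j ∧ ∃ v, v ∈ S i ∧ v ∈ S j) :
    phi S ≠ S ∧ totalLen (phi S) = totalLen S ∧
      (∑ i, (edgesOf (phi S i) : Multiset (V × V)))
        = ∑ i, (edgesOf (S i) : Multiset (V × V)) := by
  obtain ⟨i, j, v, hij, hvi, hvj, hphi⟩ := exists_phi_eq_update_swapAt hint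
  have hedges : ∑ t, (edgesOf (phi S t) : Multiset (V × V))
      = ∑ t, (edgesOf (S t) : Multiset (V × V)) := by
    rw [hphi]
    exact Finset.sum_apply_update_update (fun w => (edgesOf w : Multiset (V × V))) S hij
      (edgesOf_swapAt hvi hvj)
  refine ⟨fun hfix => hij (hS.2.2 ?_), ?_, hedges⟩
  · have hi : (swapAt v (S i) (S j)).1 = S i := by
      simpa [hphi, Function.update_of_ne hij] using congrFun hfix i
    simpa [hi] using getLast?_swapAt_fst hvi hvj
  · rw [totalLen_eq_card_sum_edgesOf, totalLen_eq_card_sum_edgesOf, hedges]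

/-- If the signature of a proper set `S` of walks is defined (i.e. two of its
walks intersect), then `φ S ≠ S`, the walks of `φ S` have the same total
length as those of `S`, and the multiset of edge occurrences over all walks of
`φ S` equals that of `S`. -/
theorem phi_of_intersecting (E : V → V → Prop) (X Y : Set V) (hXY : Disjoint X Y)
    {k : ℕ} (S : Fin k → List V) (hS : Proper E X Y S)
    (hint : ∃ i j, i ≠ j ∧ ∃ v, v ∈ S i ∧ v ∈ S j) :
    phi S ≠ S ∧ totalLen (phi S) = totalLen S ∧
      (∑ i, (edgesOf (phi S i) : Multiset (V × V)))
        = ∑ i, (edgesOf (S i) : Multiset (V × V)) :=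
  phi_of_intersecting_general E X Y S hS hint

end
end

section
/- Let G be a directed graph on n vertices with disjoint k-element sets X, Y, and suppose the fixed points of the suffix-swap involution φ on proper sets of k walks of total length at most l are exactly the proper sets of pairwise vertex-disjoint walks. Then the map sending a proper set of pairwise vertex-disjoint simple paths to its family of edge-multiplicity monomials is injective: two distinct proper sets of pairwise vertex-disjoint simple paths of total length at most l yield distinct monomials \prod_{W ∈ S} M_W. -/
set_option autoImplicit false

open scoped Classical

noncomputable section

variable {V : Type*}

/-- The monomial `M_W` of a walk `W`. -/
def walkMonomial (F : Type*) [Field F] (w : List V) : MvPolynomial (V × V) F :=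
  (edgesOf w).map (fun e => MvPolynomial.X e) |>.prod

/-!
Equal monomials mean equal multisets of edges. In a family of pairwise disjoint simple paths
every vertex has at most one outgoing edge, so a walk running along these edges is forced: it
starts in `X`, hence at the first vertex of one of the paths (interior vertices avoid `X`), and
from there it can only follow that path. So one of the two is a prefix of the other, and as the
interior vertices of a walk avoid `Y` while its last vertex lies in `Y`, they coincide.
-/

lemma edgesOf_cons_cons (a b : V) (l : List V) :
    edgesOf (a :: b :: l) = (a, b) :: edgesOf (b :: l) := rfl

lemma mem_edgesOf_iff {a b : V} {w : List V} :
    (a, b) ∈ edgesOf w ↔ ∃ l₁ l₂, w = l₁ ++ a :: b :: l₂ := by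
  induction w with
  | nil => simp [edgesOf]
  | cons x t ih =>
    cases t with
    | nil =>
      simp only [edgesOf, List.tail_cons, List.zip_nil_right, List.not_mem_nil, false_iff]
      rintro ⟨l₁, l₂, h⟩
      have := congrArg List.length h
      simp at this
      omega
    | cons y t =>
      rw [edgesOf_cons_cons, List.mem_cons, ih, Prod.mk.injEq]
      constructor
      · rintro (⟨rfl, rfl⟩ | ⟨l₁, l₂, h⟩)
        · exact ⟨[], t, rfl⟩
        · exact ⟨x :: l₁, l₂, by rw [h, List.cons_append]⟩
      · rintro ⟨_ | ⟨z, l₁⟩, l₂, h⟩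
        · simp_all
        · simp only [List.cons_append, List.cons.injEq] at h
          exact Or.inr ⟨l₁, l₂, h.2⟩

lemma isChain_mem_edgesOf (w : List V) : w.IsChain (fun a b => (a, b) ∈ edgesOf w) :=
  List.isChain_iff_forall_rel_of_append_cons_cons.mpr fun _ _ l₁ l₂ h =>
    mem_edgesOf_iff.mpr ⟨l₁, l₂, h⟩

lemma List.Nodup.eq_of_mem_edgesOf {w : List V} (hw : w.Nodup) {a b c : V}
    (hb : (a, b) ∈ edgesOf w) (hc : (a, c) ∈ edgesOf w) : b = c := by
  induction w with
  | nil => simp [edgesOf] at hb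
  | cons x t ih =>
    cases t with
    | nil => simp [edgesOf] at hb
    | cons y t =>
      rw [List.nodup_cons] at hw
      rw [edgesOf_cons_cons, List.mem_cons, Prod.mk.injEq] at hb hc
      have hx : ∀ {d}, (x, d) ∉ edgesOf (y :: t) := fun h =>
        hw.1 (List.of_mem_zip h).1
      rcases hb with ⟨rfl, rfl⟩ | hb <;> rcases hc with ⟨h, rfl⟩ | hc
      · rfl
      · exact absurd hc hx
      · exact absurd (h ▸ hb) hx
      · exact ih hw.2 hb hc

lemma List.IsChain.prefix_or_prefix {R : V → V → Prop} {w₁ w₂ : List V}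
    (h₁ : w₁.IsChain R) (h₂ : w₂.IsChain R) (hhead : w₁.head? = w₂.head?)
    (hR : ∀ a b c, R a b → R a c → b = c) :
    w₁ <+: w₂ ∨ w₂ <+: w₁ := by
  induction w₁ generalizing w₂ with
  | nil => exact Or.inl List.nil_prefix
  | cons a t₁ ih =>
    rcases w₂ with _ | ⟨b, t₂⟩
    · exact Or.inr List.nil_prefix
    obtain rfl : a = b := by simpa using hhead
    rw [List.prefix_cons_inj, List.prefix_cons_inj]
    rcases t₁ with _ | ⟨c, t₁⟩
    · exact Or.inl List.nil_prefix
    rcases t₂ with _ | ⟨d, t₂⟩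
    · exact Or.inr List.nil_prefix
    rw [List.isChain_cons_cons] at h₁ h₂
    obtain rfl := hR _ _ _ h₁.1 h₂.1
    exact ih h₁.2 h₂.2 rfl

namespace IsWalk

variable {E : V → V → Prop} {X Y : Set V} {w w' : List V}

lemma eq_of_prefix (hw : IsWalk E X Y w) (hw' : IsWalk E X Y w') (h : w <+: w') :
    w = w' := by
  obtain ⟨r, rfl⟩ := h
  obtain ⟨a, t, rfl⟩ : ∃ a t, w = a :: t :=
    List.exists_cons_of_length_pos (by have := hw.1; omega)
  have ht : t ≠ [] := by rintro rfl; simpa using hw.1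
  rcases eq_or_ne r [] with rfl | hr
  · simp
  have hlast : t.getLast ht ∈ Y :=
    hw.2.2.2.1 _ (by simp [List.getLast?_cons, List.getLast?_eq_some_getLast ht])
  refine absurd hlast (hw'.2.2.2.2 _ ?_).2
  rw [List.cons_append, List.tail_cons, List.dropLast_append_of_ne_nil hr]
  exact List.mem_append_left _ (List.getLast_mem ht)

lemma head?_eq_of_mem_edgesOf (hw : IsWalk E X Y w) {a b : V} (hab : (a, b) ∈ edgesOf w)
    (ha : a ∈ X) : w.head? = some a := by
  obtain ⟨_ | ⟨c, l₁⟩, l₂, rfl⟩ := mem_edgesOf_iff.mp hab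
  · rfl
  refine absurd ha (hw.2.2.2.2 a ?_).1
  simp [List.dropLast_append_of_ne_nil]

end IsWalk

section EdgeMultiset

variable {k : ℕ}

def edgeMultiset (S : Fin k → List V) : Multiset (V × V) :=
  ∑ i, (edgesOf (S i) : Multiset (V × V))

lemma mem_edgeMultiset {S : Fin k → List V} {e : V × V} :
    e ∈ edgeMultiset S ↔ ∃ i, e ∈ edgesOf (S i) := by
  simp [edgeMultiset, Multiset.mem_sum]

lemma walkMonomial_eq_monomial (F : Type*) [Field F] (w : List V) :
    walkMonomial F w =
      MvPolynomial.monomial (Multiset.toFinsupp (edgesOf w : Multiset (V × V))) 1 := by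
  rw [walkMonomial]
  induction edgesOf w with
  | nil => simp
  | cons e es ih =>
    rw [List.map_cons, List.prod_cons, ih, ← Multiset.cons_coe, ← Multiset.singleton_add,
      Multiset.toFinsupp_add, Multiset.toFinsupp_singleton, MvPolynomial.monomial_single_add,
      pow_one]

lemma prod_walkMonomial (F : Type*) [Field F] (S : Fin k → List V) :
    ∏ i, walkMonomial F (S i) =
      MvPolynomial.monomial (Multiset.toFinsupp (edgeMultiset S)) 1 := by
  simp only [walkMonomial_eq_monomial, edgeMultiset, map_sum, MvPolynomial.monomial_sum_one]

lemma Disjointly.eq_of_mem_edgeMultiset {S : Fin k → List V} (hd : Disjointly S)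
    (hs : ∀ i, (S i).Nodup)
    {a b c : V} (hb : (a, b) ∈ edgeMultiset S) (hc : (a, c) ∈ edgeMultiset S) : b = c := by
  obtain ⟨i, hi⟩ := mem_edgeMultiset.mp hb
  obtain ⟨j, hj⟩ := mem_edgeMultiset.mp hc
  obtain rfl : i = j := by
    by_contra hij
    exact hd i j hij a (List.of_mem_zip hi).1 (List.of_mem_zip hj).1
  exact (hs i).eq_of_mem_edgesOf hi hj

lemma isChain_mem_edgeMultiset (S : Fin k → List V) (i : Fin k) :
    (S i).IsChain (fun a b => (a, b) ∈ edgeMultiset S) :=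
  (isChain_mem_edgesOf (S i)).imp fun _ _ h => mem_edgeMultiset.mpr ⟨i, h⟩

lemma IsWalk.mem_range_of_isChain {E : V → V → Prop} {X Y : Set V} {w : List V}
    {T : Fin k → List V} (hw : IsWalk E X Y w) (hT : ∀ j, IsWalk E X Y (T j))
    (hTd : Disjointly T) (hTs : ∀ j, (T j).Nodup)
    (hchain : w.IsChain (fun a b => (a, b) ∈ edgeMultiset T)) : w ∈ Set.range T := by
  obtain ⟨a, b, t, rfl⟩ : ∃ a b t, w = a :: b :: t := by
    rcases w with _ | ⟨a, _ | ⟨b, t⟩⟩ <;> simp_all [IsWalk]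
  obtain ⟨j, hj⟩ := mem_edgeMultiset.mp (List.isChain_cons_cons.mp hchain).1
  have hhead : (T j).head? = some a := (hT j).head?_eq_of_mem_edgesOf hj (hw.2.2.1 a rfl)
  refine ⟨j, ?_⟩
  rcases hchain.prefix_or_prefix (isChain_mem_edgeMultiset T j) hhead.symm
    (fun _ _ _ => hTd.eq_of_mem_edgeMultiset hTs) with h | h
  · exact (hw.eq_of_prefix (hT j) h).symm
  · exact (hT j).eq_of_prefix hw h

lemma range_subset_range_of_edgeMultiset_subset {E : V → V → Prop} {X Y : Set V}
    {S T : Fin k → List V} (hS : ∀ i, IsWalk E X Y (S i)) (hT : ∀ j, IsWalk E X Y (T j))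
    (hTd : Disjointly T) (hTs : ∀ j, (T j).Nodup) (h : edgeMultiset S ⊆ edgeMultiset T) :
    Set.range S ⊆ Set.range T := by
  rintro _ ⟨i, rfl⟩
  exact (hS i).mem_range_of_isChain hT hTd hTs
    ((isChain_mem_edgeMultiset S i).imp fun _ _ he => h he)

end EdgeMultiset

theorem monomial_injective_on_disjoint_simple_paths_general
    (E : V → V → Prop) (X Y : Set V) (k : ℕ)
    (F : Type*) [Field F]
    (S T : Fin k → List V)
    (hS : Proper E X Y S) (hSd : Disjointly S) (hSs : ∀ i, (S i).Nodup)
    (hT : Proper E X Y T) (hTd : Disjointly T) (hTs : ∀ i, (T i).Nodup)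
    (hmono : (∏ i, walkMonomial F (S i)) = ∏ i, walkMonomial F (T i)) :
    Set.range S = Set.range T := by
  rw [prod_walkMonomial, prod_walkMonomial] at hmono
  have hedges : edgeMultiset S = edgeMultiset T :=
    Multiset.toFinsupp.injective (MvPolynomial.monomial_left_injective one_ne_zero hmono)
  exact (range_subset_range_of_edgeMultiset_subset hS.1 hT.1 hTd hTs
      (Multiset.subset_of_le hedges.le)).antisymm
    (range_subset_range_of_edgeMultiset_subset hT.1 hS.1 hSd hSs
      (Multiset.subset_of_le hedges.ge))

/-- Suppose the fixed points of the suffix-swap involution `φ` on proper sets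
of `k` walks of total length at most `l` are exactly the proper sets of
pairwise vertex-disjoint walks.  Then, on proper sets of pairwise
vertex-disjoint *simple* paths of total length at most `l`, the associated
monomial `∏_{W ∈ S} M_W` determines the set of paths: two such sets with equal
monomials consist of the same paths. -/
theorem monomial_injective_on_disjoint_simple_paths
    (E : V → V → Prop) (X Y : Set V) (hXY : Disjoint X Y) [Fintype V]
    (n : ℕ) (hn : Fintype.card V = n) (k l : ℕ)
    (F : Type*) [Field F] [CharP F 2]
    (hfix : ∀ S : Fin k → List V, Proper E X Y S → totalLen S ≤ l →
      (phi S = S ↔ Disjointly S))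
    (S T : Fin k → List V)
    (hS : Proper E X Y S) (hSd : Disjointly S) (hSs : ∀ i, (S i).Nodup)
    (hSl : totalLen S ≤ l)
    (hT : Proper E X Y T) (hTd : Disjointly T) (hTs : ∀ i, (T i).Nodup)
    (hTl : totalLen T ≤ l)
    (hmono : (∏ i, walkMonomial F (S i)) = ∏ i, walkMonomial F (T i)) :
    Set.range S = Set.range T :=
  monomial_injective_on_disjoint_simple_paths_general E X Y k F S T hS hSd hSs hT hTd hTs hmono

end
end
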